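/- Let Φ be a locally finite set of points in ℝ² that is (σ,ρ,ν)-ring regulated about the origin, with every point of Φ at distance greater than r₀ from the origin, let ℓ be a path-loss function as in the context, γ₀ > 0, m > 0, and let η₀ > 0 and α ∈ (0,1) satisfy α/η₀ > σ_β. Then sup_{x ∈ Φ, ‖x‖ ≤ τ₀} D(x, Φ) ≤ m / log₂(1 + η₀). -/

import Mathlib

/-! Layer cake: the interference of the points beyond radius `r` equals
`∫₀^{ℓ r} #{w ∈ Φ : ‖w‖ > r, ℓ ‖w‖ > u} du`, and a point counted at level `u` lies in the annulus
`r < ‖w‖ < s(u) = (C/u)^{1/β}`, so ring regulation bounds the integrand by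
`σ + ρ (s(u) - r) + ν (s(u)² - r²)`. The `ρ` and `ν` parts stay nonnegative up to `u = C r^{-β}`,
and integrating them that far gives exactly `ρ C r^{1-β}/(β-1) + 2 ν C r^{2-β}/(β-2)`; the lower
bound `ℓ r ≥ C' r^{-β}` turns the total into `(σ + ρ_β r + ν_β r²) ℓ r`. Below the first term of
`τ₀` this is at most `(α/η₀) ℓ r`, below the second the noise is at most `((1-α)/η₀) ℓ r`, so every
transmitter within `τ₀` has SrINR at least `η₀`, and every rate involved is at least
`log₂ (1 + η₀)`. -/

open MeasureTheory Set

noncomputable section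

abbrev Plane : Type := EuclideanSpace ℝ (Fin 2)

/-- `Φ` is `(σ,ρ,ν)`-ring regulated about the origin. -/
def RingRegulated (Φ : Set Plane) (σ ρ ν : ℝ) : Prop :=
  ∀ r R : ℝ, 0 ≤ r → r < R →
    ((Φ ∩ {z : Plane | r < ‖z‖ ∧ ‖z‖ < R}).ncard : ℝ)
      ≤ σ + ρ * (R - r) + ν * (R ^ 2 - r ^ 2)

/-- The tail interference at the origin from points of `Φ` at distance greater than `r`. -/
def tailInterference (ℓ : ℝ → ℝ) (Φ : Set Plane) (r : ℝ) : ℝ :=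
  ∑' w : {w : Plane // w ∈ Φ ∧ r < ‖w‖}, ℓ ‖(w : Plane)‖

/-- The signal-to-residual-interference-plus-noise ratio of the transmitter at `x`
with respect to the receiver at the origin, under successive interference cancellation. -/
def SrINR (ℓ : ℝ → ℝ) (γ₀ : ℝ) (Φ : Set Plane) (x : Plane) : ℝ :=
  ℓ ‖x‖ / (tailInterference ℓ Φ ‖x‖ + γ₀)

/-- The coverage distance lower bound `τ₀`. -/
def tau0 (C' γ₀ β σβ ρβ νβ η₀ α : ℝ) : ℝ :=
  min ((Real.sqrt (ρβ ^ 2 + 4 * νβ * (α / η₀ - σβ)) - ρβ) / (2 * νβ))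
    ((C' * (1 - α) / (η₀ * γ₀)) ^ (1 / β))

/-- The rate of the link from `x` to the typical receiver at the origin:
the infimum over the transmitters `w ∈ Φ` with `‖w‖ ≤ ‖x‖` of `log₂(1 + SrINR(w,Φ))`. -/
def rate (ℓ : ℝ → ℝ) (γ₀ : ℝ) (Φ : Set Plane) (x : Plane) : ℝ :=
  sInf ((fun w => Real.logb 2 (1 + SrINR ℓ γ₀ Φ w)) '' {w ∈ Φ | ‖w‖ ≤ ‖x‖})

/-- The virtual decoding delay of a message of `m` bits from `x` to the typical receiver. -/
def vDelay (ℓ : ℝ → ℝ) (γ₀ m : ℝ) (Φ : Set Plane) (x : Plane) : ℝ :=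
  m / rate ℓ γ₀ Φ x

/-- The SIC decoding delay from `x` to the typical receiver: the supremum of the virtual
decoding delays over the transmitters `w ∈ Φ` with higher received power, i.e. `‖w‖ ≤ ‖x‖`. -/
def sicDelay (ℓ : ℝ → ℝ) (γ₀ m : ℝ) (Φ : Set Plane) (x : Plane) : ℝ :=
  sSup ((fun w => vDelay ℓ γ₀ m Φ w) '' {w ∈ Φ | ‖w‖ ≤ ‖x‖})

theorem le_div_rpow_one_div_iff {C u t β : ℝ} (hC : 0 ≤ C) (hu : 0 < u) (ht : 0 < t)
    (hβ : 0 < β) : t ≤ (C / u) ^ (1 / β) ↔ u ≤ C * t ^ (-β) := by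
  rw [one_div, Real.le_rpow_inv_iff_of_pos ht.le (div_nonneg hC hu.le) hβ, le_div_iff₀ hu,
    Real.rpow_neg ht.le, ← div_eq_mul_inv, le_div_iff₀ (Real.rpow_pos_of_pos ht β), mul_comm]

theorem lt_div_rpow_one_div_iff {C u t β : ℝ} (hC : 0 ≤ C) (hu : 0 < u) (ht : 0 < t)
    (hβ : 0 < β) : t < (C / u) ^ (1 / β) ↔ u < C * t ^ (-β) := by
  rw [one_div, Real.lt_rpow_inv_iff_of_pos ht.le (div_nonneg hC hu.le) hβ, lt_div_iff₀ hu,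
    Real.rpow_neg ht.le, ← div_eq_mul_inv, lt_div_iff₀ (Real.rpow_pos_of_pos ht β), mul_comm]

theorem div_rpow_div_eq_rpow_one_div_rpow {C u p β : ℝ} (hC : 0 ≤ C) (hu : 0 ≤ u) :
    (C / u) ^ (p / β) = ((C / u) ^ (1 / β)) ^ p := by
  rw [← Real.rpow_mul (div_nonneg hC hu), one_div_mul_eq_div]

theorem intervalIntegrable_div_rpow {C q b : ℝ} (hC : 0 ≤ C) (hq : q < 1) (hb : 0 ≤ b) :
    IntervalIntegrable (fun u => (C / u) ^ q) volume 0 b := by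
  have hcongr : EqOn (fun u => C ^ q * u ^ (-q)) (fun u => (C / u) ^ q) (uIoc 0 b) := by
    intro u hu
    have hu : 0 ≤ u := (uIoc_of_le hb ▸ hu).1.le
    simp only [Real.div_rpow hC hu, Real.rpow_neg hu, ← div_eq_mul_inv]
  exact ((intervalIntegral.intervalIntegrable_rpow' (by linarith)).const_mul _).congr hcongr

theorem integral_div_rpow_sub_rpow {C r p β : ℝ} (hC : 0 < C) (hr : 0 < r) (hp : 0 < p)
    (hpβ : p < β) :
    ∫ u in (0:ℝ)..C * r ^ (-β), ((C / u) ^ (p / β) - r ^ p) = p * C * r ^ (p - β) / (β - p) := by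
  have hβ : 0 < β := hp.trans hpβ
  have hq : p / β < 1 := (div_lt_one hβ).2 hpβ
  have hM : 0 ≤ C * r ^ (-β) := by positivity
  have hcongr : EqOn (fun u => (C / u) ^ (p / β)) (fun u => C ^ (p / β) * u ^ (-(p / β)))
      (uIcc 0 (C * r ^ (-β))) := by
    intro u hu
    have hu : 0 ≤ u := (uIcc_of_le hM ▸ hu).1
    simp only [Real.div_rpow hC.le hu, Real.rpow_neg hu, ← div_eq_mul_inv]
  have hne : -(p / β) + 1 ≠ 0 := by linarith
  rw [intervalIntegral.integral_sub (intervalIntegrable_div_rpow hC.le hq hM)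
      intervalIntegrable_const, intervalIntegral.integral_congr hcongr,
    intervalIntegral.integral_const_mul, integral_rpow (Or.inl (by linarith)),
    intervalIntegral.integral_const, Real.zero_rpow hne, sub_zero, sub_zero, smul_eq_mul,
    Real.mul_rpow hC.le (by positivity), ← Real.rpow_mul hr.le]
  have hexp : -β * (-(p / β) + 1) = p - β := by field_simp; ring
  have hC1 : C ^ (p / β) * C ^ (-(p / β) + 1) = C := by
    rw [← Real.rpow_add hC, add_neg_cancel_left, Real.rpow_one]
  have hr1 : C * r ^ (-β) * r ^ p = C * r ^ (p - β) := by
    rw [mul_assoc, ← Real.rpow_add hr, neg_add_eq_sub]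
  have hd : -(p / β) + 1 = (β - p) / β := by field_simp; ring
  have hβp : β - p ≠ 0 := by linarith
  rw [hexp, hr1, ← mul_div_assoc, ← mul_assoc, hC1, hd]
  field_simp
  ring

theorem integral_div_rpow_sub_rpow_le {C r p β L : ℝ} (hC : 0 < C) (hr : 0 < r) (hp : 0 < p)
    (hpβ : p < β) (hL : 0 ≤ L) (hLM : L ≤ C * r ^ (-β)) :
    ∫ u in (0:ℝ)..L, ((C / u) ^ (p / β) - r ^ p) ≤ p * C * r ^ (p - β) / (β - p) := by
  have hβ : 0 < β := hp.trans hpβ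
  have hq : p / β < 1 := (div_lt_one hβ).2 hpβ
  have hLmem : L ∈ uIcc 0 (C * r ^ (-β)) := mem_uIcc_of_le hL hLM
  have hint : IntervalIntegrable (fun u => (C / u) ^ (p / β) - r ^ p) volume 0 (C * r ^ (-β)) :=
    (intervalIntegrable_div_rpow hC.le hq (hL.trans hLM)).sub intervalIntegrable_const
  have hnonneg : ∀ u ∈ Ioo L (C * r ^ (-β)), (0:ℝ) ≤ (C / u) ^ (p / β) - r ^ p := by
    intro u hu
    have hu0 : 0 < u := hL.trans_lt hu.1
    have hru : r ≤ (C / u) ^ (1 / β) := (le_div_rpow_one_div_iff hC.le hu0 hr hβ).2 hu.2.le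
    rw [div_rpow_div_eq_rpow_one_div_rpow hC.le hu0.le, sub_nonneg]
    exact Real.rpow_le_rpow hr.le hru hp.le
  have htail : 0 ≤ ∫ u in L..C * r ^ (-β), ((C / u) ^ (p / β) - r ^ p) := by
    simpa using intervalIntegral.integral_mono_on_of_le_Ioo hLM intervalIntegrable_const
      (hint.mono_set (uIcc_subset_uIcc hLmem right_mem_uIcc)) hnonneg
  have hsplit := intervalIntegral.integral_add_adjacent_intervals
    (hint.mono_set (uIcc_subset_uIcc left_mem_uIcc hLmem))
    (hint.mono_set (uIcc_subset_uIcc hLmem right_mem_uIcc))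
  rw [integral_div_rpow_sub_rpow hC hr hp hpβ] at hsplit
  linarith

theorem intervalIntegral_indicator_Iio_one {g M : ℝ} (h0 : 0 ≤ g) (hM : g ≤ M) :
    ∫ u in (0:ℝ)..M, (Iio g).indicator 1 u = g := by
  have hinter : Iio g ∩ Ioc 0 M = Ioo 0 g := by
    ext u
    simp only [mem_inter_iff, mem_Iio, mem_Ioc, mem_Ioo]
    exact ⟨fun ⟨hug, hu0, _⟩ => ⟨hu0, hug⟩, fun ⟨hu0, hug⟩ => ⟨hug, hu0, by linarith⟩⟩
  rw [intervalIntegral.integral_of_le (h0.trans hM), integral_indicator_one measurableSet_Iio,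
    measureReal_restrict_apply measurableSet_Iio, hinter, Real.volume_real_Ioo_of_le h0, sub_zero]

theorem Finset.sum_eq_integral_card_filter_lt {ι : Type*} (S : Finset ι) (g : ι → ℝ) {M : ℝ}
    (hg : ∀ i ∈ S, 0 ≤ g i ∧ g i ≤ M) :
    ∑ i ∈ S, g i = ∫ u in (0:ℝ)..M, ((S.filter (fun i => u < g i)).card : ℝ) := by
  have hcard (u : ℝ) :
      ((S.filter (fun i => u < g i)).card : ℝ) = ∑ i ∈ S, (Set.Iio (g i)).indicator 1 u := by
    simp only [Finset.natCast_card_filter, Set.indicator_apply, Set.mem_Iio, Pi.one_apply]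
  simp_rw [hcard]
  rw [intervalIntegral.integral_finsetSum fun i _ => ?_]
  · exact Finset.sum_congr rfl fun i hi =>
      (intervalIntegral_indicator_Iio_one (hg i hi).1 (hg i hi).2).symm
  · have h1 : IntervalIntegrable (1 : ℝ → ℝ) volume 0 M := intervalIntegrable_const
    exact ⟨h1.1.indicator measurableSet_Iio, h1.2.indicator measurableSet_Iio⟩

theorem RingRegulated.card_le {Φ : Set Plane} {σ ρ ν : ℝ}
    (hloc : ∀ R : ℝ, (Φ ∩ Metric.closedBall 0 R).Finite) (hreg : RingRegulated Φ σ ρ ν)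
    {r R : ℝ} (hr : 0 ≤ r) (hrR : r < R) (S : Finset Plane)
    (hS : ∀ w ∈ S, w ∈ Φ ∧ r < ‖w‖ ∧ ‖w‖ < R) :
    (S.card : ℝ) ≤ σ + ρ * (R - r) + ν * (R ^ 2 - r ^ 2) := by
  have hsub : (S : Set Plane) ⊆ Φ ∩ {z : Plane | r < ‖z‖ ∧ ‖z‖ < R} := fun w hw => hS w hw
  have hfin : (Φ ∩ {z : Plane | r < ‖z‖ ∧ ‖z‖ < R}).Finite :=
    (hloc R).subset fun z ⟨hzΦ, _, hzR⟩ => ⟨hzΦ, mem_closedBall_zero_iff.2 hzR.le⟩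
  calc (S.card : ℝ) = (S : Set Plane).ncard := by rw [ncard_coe_finset]
    _ ≤ (Φ ∩ {z : Plane | r < ‖z‖ ∧ ‖z‖ < R}).ncard := by
      exact_mod_cast ncard_le_ncard hsub hfin
    _ ≤ σ + ρ * (R - r) + ν * (R ^ 2 - r ^ 2) := hreg r R hr hrR

theorem RingRegulated.card_filter_lt_le {Φ : Set Plane} {σ ρ ν : ℝ}
    (hloc : ∀ R : ℝ, (Φ ∩ Metric.closedBall 0 R).Finite) (hreg : RingRegulated Φ σ ρ ν)
    {ℓ : ℝ → ℝ} {C β r u : ℝ} (hC : 0 ≤ C) (hβ : 0 < β) (hr : 0 < r)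
    (hℓub : ∀ t, r < t → ℓ t ≤ C * t ^ (-β)) (hu : 0 < u) (huM : u < C * r ^ (-β))
    (S : Finset Plane) (hS : ∀ w ∈ S, w ∈ Φ ∧ r < ‖w‖) :
    ((S.filter fun w => u < ℓ ‖w‖).card : ℝ)
      ≤ σ + ρ * ((C / u) ^ (1 / β) - r) + ν * ((C / u) ^ (2 / β) - r ^ 2) := by
  rw [div_rpow_div_eq_rpow_one_div_rpow (p := 2) hC hu.le, Real.rpow_two]
  refine hreg.card_le hloc hr.le ((lt_div_rpow_one_div_iff hC hu hr hβ).2 huM) _ fun w hw => ?_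
  obtain ⟨hwS, huw⟩ := Finset.mem_filter.1 hw
  obtain ⟨hwΦ, hrw⟩ := hS w hwS
  exact ⟨hwΦ, hrw, (lt_div_rpow_one_div_iff hC hu (hr.trans hrw) hβ).2
    (huw.trans_le (hℓub _ hrw))⟩

theorem RingRegulated.sum_le {Φ : Set Plane} {σ ρ ν : ℝ}
    (hloc : ∀ R : ℝ, (Φ ∩ Metric.closedBall 0 R).Finite) (hreg : RingRegulated Φ σ ρ ν)
    (hρ : 0 ≤ ρ) (hν : 0 ≤ ν) {ℓ : ℝ → ℝ} {C β r : ℝ} (hℓ0 : ∀ t, 0 ≤ ℓ t)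
    (hℓanti : AntitoneOn ℓ (Ici r)) (hC : 0 < C) (hβ : 2 < β) (hr : 0 < r)
    (hℓub : ∀ t, r ≤ t → ℓ t ≤ C * t ^ (-β)) (S : Finset Plane)
    (hS : ∀ w ∈ S, w ∈ Φ ∧ r < ‖w‖) :
    ∑ w ∈ S, ℓ ‖w‖
      ≤ σ * ℓ r + ρ * (C * r ^ (1 - β) / (β - 1)) + ν * (2 * C * r ^ (2 - β) / (β - 2)) := by
  have hβ0 : 0 < β := by linarith
  have hrr : r ∈ Ici r := mem_Ici.2 le_rfl
  have hg : ∀ w ∈ S, 0 ≤ ℓ ‖w‖ ∧ ℓ ‖w‖ ≤ ℓ r := fun w hw =>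
    ⟨hℓ0 _, hℓanti hrr (mem_Ici.2 (hS w hw).2.le) (hS w hw).2.le⟩
  have hL : 0 ≤ ℓ r := hℓ0 r
  have hLM : ℓ r ≤ C * r ^ (-β) := hℓub r le_rfl
  have hint (p : ℝ) (hpβ : p < β) :
      IntervalIntegrable (fun u => (C / u) ^ (p / β) - r ^ p) volume 0 (ℓ r) :=
    (intervalIntegrable_div_rpow hC.le ((div_lt_one hβ0).2 hpβ) hL).sub intervalIntegrable_const
  have hρint := (hint 1 (by linarith)).const_mul ρ
  have hνint := (hint 2 hβ).const_mul ν
  have hN : Antitone fun u : ℝ => ((S.filter fun w => u < ℓ ‖w‖).card : ℝ) := fun u u' huu' =>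
    Nat.cast_le.2 (Finset.card_le_card fun w hw => by
      rw [Finset.mem_filter] at hw ⊢
      exact ⟨hw.1, huu'.trans_lt hw.2⟩)
  rw [Finset.sum_eq_integral_card_filter_lt S (fun w => ℓ ‖w‖) hg]
  calc ∫ u in (0:ℝ)..ℓ r, ((S.filter fun w => u < ℓ ‖w‖).card : ℝ)
      ≤ ∫ u in (0:ℝ)..ℓ r, (σ + ρ * ((C / u) ^ (1 / β) - r ^ (1:ℝ))
          + ν * ((C / u) ^ (2 / β) - r ^ (2:ℝ))) := by
        refine intervalIntegral.integral_mono_on_of_le_Ioo hL hN.intervalIntegrable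
          ((intervalIntegrable_const.add hρint).add hνint) fun u hu => ?_
        rw [Real.rpow_one, Real.rpow_two]
        exact hreg.card_filter_lt_le hloc hC.le hβ0 hr (fun t ht => hℓub t ht.le) hu.1
          (hu.2.trans_le hLM) S hS
    _ = σ * ℓ r + ρ * (∫ u in (0:ℝ)..ℓ r, ((C / u) ^ (1 / β) - r ^ (1:ℝ)))
          + ν * (∫ u in (0:ℝ)..ℓ r, ((C / u) ^ (2 / β) - r ^ (2:ℝ))) := by
        rw [intervalIntegral.integral_add (intervalIntegrable_const.add hρint) hνint,
          intervalIntegral.integral_add intervalIntegrable_const hρint,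
          intervalIntegral.integral_const, intervalIntegral.integral_const_mul,
          intervalIntegral.integral_const_mul, sub_zero, smul_eq_mul, mul_comm (ℓ r)]
    _ ≤ σ * ℓ r + ρ * (C * r ^ (1 - β) / (β - 1)) + ν * (2 * C * r ^ (2 - β) / (β - 2)) := by
        have h1 := integral_div_rpow_sub_rpow_le hC hr one_pos (by linarith) hL hLM
        have h2 := integral_div_rpow_sub_rpow_le hC hr two_pos hβ hL hLM
        rw [one_mul] at h1
        linarith [mul_le_mul_of_nonneg_left h1 hρ, mul_le_mul_of_nonneg_left h2 hν]

theorem RingRegulated.tailInterference_le {Φ : Set Plane} {σ ρ ν : ℝ}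
    (hloc : ∀ R : ℝ, (Φ ∩ Metric.closedBall 0 R).Finite) (hreg : RingRegulated Φ σ ρ ν)
    (hρ : 0 ≤ ρ) (hν : 0 ≤ ν) {ℓ : ℝ → ℝ} {C β r : ℝ} (hℓ0 : ∀ t, 0 ≤ ℓ t)
    (hℓanti : AntitoneOn ℓ (Ici r)) (hC : 0 < C) (hβ : 2 < β) (hr : 0 < r)
    (hℓub : ∀ t, r ≤ t → ℓ t ≤ C * t ^ (-β)) :
    tailInterference ℓ Φ r
      ≤ σ * ℓ r + ρ * (C * r ^ (1 - β) / (β - 1)) + ν * (2 * C * r ^ (2 - β) / (β - 2)) := by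
  have hsum := hreg.sum_le hloc hρ hν hℓ0 hℓanti hC hβ hr hℓub
  refine tsum_le_of_sum_le' (by simpa using hsum ∅) fun s => ?_
  have hs := hsum (s.map (Function.Embedding.subtype _)) fun w hw => by
    obtain ⟨w', -, rfl⟩ := Finset.mem_map.1 hw
    exact w'.2
  rwa [Finset.sum_map] at hs

theorem mul_rpow_sub_le {C C' ℓr r p β : ℝ} (hC' : 0 < C') (hC : 0 ≤ C) (hr : 0 < r)
    (hℓr : C' * r ^ (-β) ≤ ℓr) : C * r ^ (p - β) ≤ C / C' * r ^ p * ℓr :=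
  calc C * r ^ (p - β) = C / C' * r ^ p * (C' * r ^ (-β)) := by
        rw [sub_eq_add_neg, Real.rpow_add hr]
        field_simp
    _ ≤ C / C' * r ^ p * ℓr := by gcongr

theorem RingRegulated.tailInterference_le_mul {Φ : Set Plane} {σ ρ ν : ℝ}
    (hloc : ∀ R : ℝ, (Φ ∩ Metric.closedBall 0 R).Finite) (hreg : RingRegulated Φ σ ρ ν)
    (hρ : 0 ≤ ρ) (hν : 0 ≤ ν) {ℓ : ℝ → ℝ} {C C' β r : ℝ} (hℓ0 : ∀ t, 0 ≤ ℓ t)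
    (hℓanti : AntitoneOn ℓ (Ici r)) (hC' : 0 < C') (hCC' : C' ≤ C) (hβ : 2 < β) (hr : 0 < r)
    (hℓlb : C' * r ^ (-β) ≤ ℓ r) (hℓub : ∀ t, r ≤ t → ℓ t ≤ C * t ^ (-β)) :
    tailInterference ℓ Φ r
      ≤ (σ + (C / C') * (ρ / (β - 1)) * r + (C / C') * (2 * ν / (β - 2)) * r ^ 2) * ℓ r := by
  have hC : 0 < C := hC'.trans_le hCC'
  have h1 := mul_rpow_sub_le (p := 1) hC' hC.le hr hℓlb
  have h2 := mul_rpow_sub_le (p := 2) hC' hC.le hr hℓlb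
  rw [Real.rpow_one] at h1
  rw [Real.rpow_two] at h2
  have hβ1 : 0 < β - 1 := by linarith
  have hβ2 : 0 < β - 2 := by linarith
  calc tailInterference ℓ Φ r
      ≤ σ * ℓ r + ρ * (C * r ^ (1 - β) / (β - 1)) + ν * (2 * C * r ^ (2 - β) / (β - 2)) :=
        hreg.tailInterference_le hloc hρ hν hℓ0 hℓanti hC hβ hr hℓub
    _ ≤ σ * ℓ r + ρ * (C / C' * r * ℓ r / (β - 1))
          + ν * (2 * (C / C' * r ^ 2 * ℓ r) / (β - 2)) := by
        gcongr σ * ℓ r + ρ * (?_ / _) + ν * (?_ / _)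
        linarith
    _ = _ := by ring

theorem add_mul_add_mul_sq_le_of_le_root {a b c r s : ℝ} (hb : 0 ≤ b) (hc : 0 < c) (hr : 0 ≤ r)
    (has : a ≤ s) (h : r ≤ (√(b ^ 2 + 4 * c * (s - a)) - b) / (2 * c)) :
    a + b * r + c * r ^ 2 ≤ s := by
  have hroot : 2 * c * r + b ≤ √(b ^ 2 + 4 * c * (s - a)) := by
    rw [le_div_iff₀ (by positivity)] at h
    linarith
  have hsq := (Real.le_sqrt (by positivity) (by nlinarith)).1 hroot
  nlinarith

theorem le_SrINR_of_norm_le_tau0 {Φ : Set Plane} {σ ρ ν : ℝ} (hρ : 0 ≤ ρ) (hν : 0 ≤ ν)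
    (hloc : ∀ R : ℝ, (Φ ∩ Metric.closedBall 0 R).Finite) (hreg : RingRegulated Φ σ ρ ν)
    {ℓ : ℝ → ℝ} (hℓ0 : ∀ r, 0 ≤ ℓ r) (hℓanti : AntitoneOn ℓ (Ici 0))
    {C C' r₀ β : ℝ} (hC' : 0 < C') (hCC' : C' ≤ C) (hr₀ : 0 < r₀) (hβ : 2 < β)
    (hℓlb : ∀ r, r₀ < r → C' * r ^ (-β) ≤ ℓ r) (hℓub : ∀ r, r₀ < r → ℓ r ≤ C * r ^ (-β))
    {γ₀ η₀ α : ℝ} (hγ₀ : 0 < γ₀) (hη₀ : 0 < η₀) (hα1 : α < 1) (hαη : σ < α / η₀)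
    {v : Plane} (hv : r₀ < ‖v‖)
    (hvτ : ‖v‖ ≤ tau0 C' γ₀ β σ ((C / C') * (ρ / (β - 1)))
      ((C / C') * (2 * ν / (β - 2))) η₀ α) :
    η₀ ≤ SrINR ℓ γ₀ Φ v := by
  set r := ‖v‖
  have hr : 0 < r := hr₀.trans hv
  have hβ0 : 0 < β := by linarith
  obtain ⟨hτ_int, hτ_noise⟩ := le_min_iff.1 hvτ
  have hC : 0 < C := hC'.trans_le hCC'
  have hνpos : 0 < (C / C') * (2 * ν / (β - 2)) := by
    rcases hν.eq_or_lt with rfl | hν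
    -- for `ν = 0` the first term of `τ₀` divides by zero, so `τ₀ ≤ 0` and no point qualifies
    · simp only [mul_zero, zero_div, div_zero] at hτ_int
      linarith
    · have : 0 < β - 2 := by linarith
      positivity
  have hI : tailInterference ℓ Φ r ≤ α / η₀ * ℓ r := by
    refine (hreg.tailInterference_le_mul hloc hρ hν hℓ0
      (hℓanti.mono (Ici_subset_Ici.2 hr.le)) hC' hCC' hβ hr (hℓlb r hv)
      fun t ht => hℓub t (hv.trans_le ht)).trans (mul_le_mul_of_nonneg_right ?_ (hℓ0 r))
    exact add_mul_add_mul_sq_le_of_le_root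
      (mul_nonneg (div_nonneg hC.le hC'.le) (div_nonneg hρ (by linarith))) hνpos hr.le hαη.le hτ_int
  have hnoise : η₀ * γ₀ ≤ (1 - α) * ℓ r := by
    have hK : 0 ≤ C' * (1 - α) := mul_nonneg hC'.le (by linarith)
    calc η₀ * γ₀ ≤ C' * (1 - α) * r ^ (-β) :=
          (le_div_rpow_one_div_iff hK (mul_pos hη₀ hγ₀) hr hβ0).1 hτ_noise
      _ = (1 - α) * (C' * r ^ (-β)) := by ring
      _ ≤ (1 - α) * ℓ r := mul_le_mul_of_nonneg_left (hℓlb r hv) (by linarith)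
  have hI0 : 0 ≤ tailInterference ℓ Φ r := tsum_nonneg fun _ => hℓ0 _
  rw [SrINR, le_div_iff₀ (by positivity)]
  rw [div_mul_eq_mul_div, le_div_iff₀ hη₀] at hI
  nlinarith

theorem logb_le_rate {ℓ : ℝ → ℝ} {γ₀ η₀ : ℝ} {Φ : Set Plane} {x : Plane} (hη₀ : 0 < η₀)
    (hx : x ∈ Φ) (h : ∀ w ∈ Φ, ‖w‖ ≤ ‖x‖ → η₀ ≤ SrINR ℓ γ₀ Φ w) :
    Real.logb 2 (1 + η₀) ≤ rate ℓ γ₀ Φ x := by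
  refine le_csInf ⟨_, mem_image_of_mem _ ⟨hx, le_rfl⟩⟩ ?_
  rintro _ ⟨w, ⟨hw, hwx⟩, rfl⟩
  exact Real.logb_le_logb_of_le one_lt_two (by linarith) (by linarith [h w hw hwx])

theorem sicDelay_le {ℓ : ℝ → ℝ} {γ₀ η₀ m : ℝ} {Φ : Set Plane} {x : Plane} (hm : 0 ≤ m)
    (hη₀ : 0 < η₀) (h : ∀ w ∈ Φ, ‖w‖ ≤ ‖x‖ → η₀ ≤ SrINR ℓ γ₀ Φ w) :
    sicDelay ℓ γ₀ m Φ x ≤ m / Real.logb 2 (1 + η₀) := by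
  have hlog : 0 < Real.logb 2 (1 + η₀) := Real.logb_pos one_lt_two (by linarith)
  refine Real.sSup_le ?_ (div_nonneg hm hlog.le)
  rintro _ ⟨w, ⟨hw, hwx⟩, rfl⟩
  exact div_le_div_of_nonneg_left hm hlog
    (logb_le_rate hη₀ hw fun v hv hvw => h v hv (hvw.trans hwx))

theorem stmt6_general (Φ : Set Plane) (σ ρ ν : ℝ)
    (hρ : 0 ≤ ρ) (hν : 0 ≤ ν)
    (hloc : ∀ R : ℝ, (Φ ∩ Metric.closedBall 0 R).Finite)
    (hreg : RingRegulated Φ σ ρ ν)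
    (ℓ : ℝ → ℝ) (hℓ0 : ∀ r, 0 ≤ ℓ r)
    (hℓanti : AntitoneOn ℓ (Set.Ici 0))
    (C C' r₀ β : ℝ) (hC' : 0 < C') (hCC' : C' ≤ C) (hr₀ : 0 < r₀) (hβ : 2 < β)
    (hℓlb : ∀ r, r₀ < r → C' * r ^ (-β) ≤ ℓ r)
    (hℓub : ∀ r, r₀ < r → ℓ r ≤ C * r ^ (-β))
    (hΦr₀ : ∀ w ∈ Φ, r₀ < ‖w‖)
    (γ₀ : ℝ) (hγ₀ : 0 < γ₀) (m : ℝ) (hm : 0 < m)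
    (η₀ α : ℝ) (hη₀ : 0 < η₀) (hα1 : α < 1)
    (hαη : σ < α / η₀) :
    sSup ((fun x => sicDelay ℓ γ₀ m Φ x) ''
        {x ∈ Φ | ‖x‖ ≤ tau0 C' γ₀ β σ ((C / C') * (ρ / (β - 1)))
            ((C / C') * (2 * ν / (β - 2))) η₀ α})
      ≤ m / Real.logb 2 (1 + η₀) := by
  refine Real.sSup_le ?_ (div_nonneg hm.le (Real.logb_pos one_lt_two (by linarith)).le)
  rintro _ ⟨x, ⟨-, hxτ⟩, rfl⟩
  exact sicDelay_le hm.le hη₀ fun w hw hwx => le_SrINR_of_norm_le_tau0 hρ hν hloc hreg hℓ0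
    hℓanti hC' hCC' hr₀ hβ hℓlb hℓub hγ₀ hη₀ hα1 hαη (hΦr₀ w hw) (hwx.trans hxτ)

theorem stmt6 (Φ : Set Plane) (σ ρ ν : ℝ)
    (hσ : 0 ≤ σ) (hρ : 0 ≤ ρ) (hν : 0 ≤ ν)
    (hloc : ∀ R : ℝ, (Φ ∩ Metric.closedBall 0 R).Finite)
    (hreg : RingRegulated Φ σ ρ ν)
    (ℓ : ℝ → ℝ) (hℓ0 : ∀ r, 0 ≤ ℓ r)
    (hℓanti : AntitoneOn ℓ (Set.Ici 0))
    (hℓbdd : BddAbove (ℓ '' Set.Ici 0))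
    (C C' r₀ β : ℝ) (hC' : 0 < C') (hCC' : C' ≤ C) (hr₀ : 0 < r₀) (hβ : 2 < β)
    (hℓlb : ∀ r, r₀ < r → C' * r ^ (-β) ≤ ℓ r)
    (hℓub : ∀ r, r₀ < r → ℓ r ≤ C * r ^ (-β))
    (hΦr₀ : ∀ w ∈ Φ, r₀ < ‖w‖)
    (γ₀ : ℝ) (hγ₀ : 0 < γ₀) (m : ℝ) (hm : 0 < m)
    (η₀ α : ℝ) (hη₀ : 0 < η₀) (hα0 : 0 < α) (hα1 : α < 1)
    (hαη : σ < α / η₀) :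
    sSup ((fun x => sicDelay ℓ γ₀ m Φ x) ''
        {x ∈ Φ | ‖x‖ ≤ tau0 C' γ₀ β σ ((C / C') * (ρ / (β - 1)))
            ((C / C') * (2 * ν / (β - 2))) η₀ α})
      ≤ m / Real.logb 2 (1 + η₀) :=
  stmt6_general Φ σ ρ ν hρ hν hloc hreg ℓ hℓ0 hℓanti C C' r₀ β hC' hCC' hr₀ hβ hℓlb hℓub hΦr₀ γ₀ hγ₀
    m hm η₀ α hη₀ hα1 hαη
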